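/- arXiv:2206.00194 — 5 statements merged into one kernel-verified Lean document; each statement's English description precedes it below -/
import Mathlib

section
/- Let 𝔤 be a finite-dimensional simple Lie algebra over ℂ and R a nontrivial commutative ring equipped with a ℂ-algebra structure. For every α, β ∈ R, the bracket on the R-module 𝔤_R × 𝔤_R given by [(x,x'),(y,y')] = ([x,y] + α[x',y'], [x,y'] + [x',y] + β[x',y']) is antisymmetric and satisfies the Jacobi identity, so it defines a Lie algebra 𝔞(α,β) over R. -/
open TensorProduct

/-- The bracket on `M × M` with parameters `α, β`:
`[(x,x'),(y,y')] = ([x,y] + α[x',y'], [x,y'] + [x',y] + β[x',y'])`. -/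
def aBracket {R M : Type*} [CommRing R] [LieRing M] [LieAlgebra R M] (α β : R)
    (u v : M × M) : M × M :=
  (⁅u.1, v.1⁆ + α • ⁅u.2, v.2⁆, ⁅u.1, v.2⁆ + ⁅u.2, v.1⁆ + β • ⁅u.2, v.2⁆)

/-- Let `L` be a finite-dimensional simple Lie algebra over `ℂ` and `R` a nontrivial
commutative `ℂ`-algebra.  For every `α, β ∈ R`, the bracket
`[(x,x'),(y,y')] = ([x,y] + α[x',y'], [x,y'] + [x',y] + β[x',y'])` on
`(R ⊗[ℂ] L) × (R ⊗[ℂ] L)` is antisymmetric and satisfies the Jacobi identity. -/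
theorem aBracket_antisymm_and_jacobi
    (L : Type*) [LieRing L] [LieAlgebra ℂ L] [FiniteDimensional ℂ L]
    [LieAlgebra.IsSimple ℂ L]
    (R : Type*) [CommRing R] [Nontrivial R] [Algebra ℂ R]
    (α β : R) :
    (∀ u v : (R ⊗[ℂ] L) × (R ⊗[ℂ] L), aBracket α β u v = - aBracket α β v u) ∧
      (∀ u v w : (R ⊗[ℂ] L) × (R ⊗[ℂ] L),
        aBracket α β (aBracket α β u v) w + aBracket α β (aBracket α β v w) u +
          aBracket α β (aBracket α β w u) v = 0) := by
  have J : ∀ x y z : R ⊗[ℂ] L, ⁅⁅x, y⁆, z⁆ + ⁅⁅y, z⁆, x⁆ + ⁅⁅z, x⁆, y⁆ = 0 := by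
    intro x y z
    have h := lie_jacobi x y z
    rw [← lie_skew x ⁅y, z⁆, ← lie_skew y ⁅z, x⁆, ← lie_skew z ⁅x, y⁆] at h
    linear_combination (norm := abel) -h
  constructor
  · rintro ⟨a, a'⟩ ⟨b, b'⟩
    simp only [aBracket, Prod.neg_mk, Prod.mk.injEq, ← lie_skew a b, ← lie_skew a' b',
      ← lie_skew a b', ← lie_skew a' b, smul_neg]
    constructor <;> abel
  · rintro ⟨a, a'⟩ ⟨b, b'⟩ ⟨c, c'⟩
    simp only [aBracket, Prod.mk_add_mk, Prod.mk.injEq, add_lie, lie_add, smul_lie, lie_smul,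
      smul_add, smul_smul, Prod.mk_eq_zero]
    constructor
    · linear_combination (norm := module) J a b c + α • J a' b' c + α • J a b' c' +
        α • J a' b c' + (α * β) • J a' b' c'
    · linear_combination (norm := module) J a b c' + J a' b c + J a b' c + α • J a' b' c' +
        β • J a' b' c + β • J a b' c' + β • J a' b c' + (β * β) • J a' b' c'
end

section
/- Let 𝔤 be a finite-dimensional simple Lie algebra over ℂ, R a nontrivial commutative ring equipped with a ℂ-algebra structure, and α, β ∈ R with 4α + β² = 0. Then the map T(𝔤)_R → 𝔞(α,β), (x,y) ↦ (x − (β/2)·y, y), is an isomorphism of Lie algebras over R from the Takiff algebra T(𝔤)_R onto 𝔞(α,β). -/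
open TensorProduct

/-- The Takiff bracket on `M × M`: `[(x,x'),(y,y')] = ([x,y], [x,y'] + [x',y])`,
i.e. the bracket of `𝔤 ⊗ R[ε]/(ε²)`. -/
def takiffBracket {M : Type*} [LieRing M] (u v : M × M) : M × M :=
  (⁅u.1, v.1⁆, ⁅u.1, v.2⁆ + ⁅u.2, v.1⁆)

/-- Let `L` be a finite-dimensional simple Lie algebra over `ℂ`, `R` a nontrivial commutative
`ℂ`-algebra and `α, β ∈ R` with `4α + β² = 0`.  Then the map
`(x,y) ↦ (x − (β/2) • y, y)` is an isomorphism of Lie algebras over `R` from the Takiff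
algebra `T(𝔤)_R` onto `𝔞(α,β)`. -/
theorem takiff_iso_of_discriminant_zero
    (L : Type*) [LieRing L] [LieAlgebra ℂ L] [FiniteDimensional ℂ L]
    [LieAlgebra.IsSimple ℂ L]
    (R : Type*) [CommRing R] [Nontrivial R] [Algebra ℂ R]
    (α β : R) (h : 4 * α + β * β = 0) :
    let ψ : (R ⊗[ℂ] L) × (R ⊗[ℂ] L) → (R ⊗[ℂ] L) × (R ⊗[ℂ] L) :=
      fun u => (u.1 - ((1/2 : ℂ) • β) • u.2, u.2)
    Function.Bijective ψ ∧
      (∀ u v, ψ (u + v) = ψ u + ψ v) ∧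
      (∀ (r : R) u, ψ (r • u) = r • ψ u) ∧
      (∀ u v, ψ (takiffBracket u v) = aBracket α β (ψ u) (ψ v)) := by
  intro ψ
  obtain ⟨c, hc⟩ : ∃ c : R, (1/2 : ℂ) • β = c := ⟨_, rfl⟩
  have hb : β = c + c := by
    rw [← hc, ← add_smul]; norm_num
  have hcc : c * c = -α := by
    rw [← hc, smul_mul_smul_comm]
    have hββ : β * β = -(4 * α) := by linear_combination h
    rw [hββ, smul_neg, Algebra.smul_def]
    have h4 : (4 : R) = algebraMap ℂ R 4 := by
      rw [map_ofNat]
    rw [h4, ← mul_assoc, ← map_mul]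
    norm_num
  have hψ : ∀ u : (R ⊗[ℂ] L) × (R ⊗[ℂ] L), ψ u = (u.1 - c • u.2, u.2) := by
    intro u; simp only [ψ, hc]
  have lsm : ∀ (t : R) (x m : R ⊗[ℂ] L), ⁅x, t • m⁆ = t • ⁅x, m⁆ :=
    fun t x m => lie_smul t x m
  have slm : ∀ (t : R) (x m : R ⊗[ℂ] L), ⁅t • x, m⁆ = t • ⁅x, m⁆ :=
    fun t x m => smul_lie t x m
  refine ⟨?_, ?_, ?_, ?_⟩
  · rw [Function.bijective_iff_has_inverse]
    refine ⟨fun u => (u.1 + c • u.2, u.2), ?_, ?_⟩ <;> intro u <;> rw [hψ]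
    · show (u.1 - c • u.2 + c • u.2, u.2) = u
      rw [sub_add_cancel]
    · show (u.1 + c • u.2 - c • u.2, u.2) = u
      rw [add_sub_cancel_right]
  · intro u v
    simp only [hψ, Prod.fst_add, Prod.snd_add, Prod.mk_add_mk, Prod.mk.injEq]
    exact ⟨by module, trivial⟩
  · intro r u
    simp only [hψ, Prod.smul_fst, Prod.smul_snd, Prod.smul_mk, Prod.mk.injEq]
    exact ⟨by module, trivial⟩
  · intro u v
    simp only [hψ, hc, takiffBracket, aBracket, Prod.mk.injEq]
    constructor
    · have hα : α = -(c * c) := by linear_combination hcc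
      rw [hα]
      simp only [lie_sub, sub_lie, lsm, slm, smul_smul]
      module
    · simp only [lie_sub, sub_lie, lsm, slm]
      rw [hb]
      module
end

section
/- Let 𝔤 be a finite-dimensional simple Lie algebra over ℂ, R a nontrivial commutative ring equipped with a ℂ-algebra structure, α, β ∈ R, and suppose s ∈ R is invertible with s² = 4α + β². Set p_± := (−β ± s)/2. Then the maps φ_± : 𝔤_R → 𝔞(α,β), x ↦ ±s⁻¹·(p_±·x, x), are Lie algebra homomorphisms over R which satisfy [(z,0), φ_±(x)] = φ_±([z,x]) and [(0,z), φ_±(x)] = (p_± + β)·φ_±([z,x]) for all x, z ∈ 𝔤_R (so that the images of φ_+ and φ_− are Lie ideals of 𝔞(α,β)), and moreover [φ_+(x), φ_−(y)] = 0 for all x, y ∈ 𝔤_R. -/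
open TensorProduct

private lemma aux_lie_smul {L : Type*} [LieRing L] [LieAlgebra ℂ L]
    {R : Type*} [CommRing R] [Algebra ℂ R] (d : R) (x y : R ⊗[ℂ] L) :
    ⁅x, d • y⁆ = d • ⁅x, y⁆ := lie_smul d x y

private lemma aux_smul_lie {L : Type*} [LieRing L] [LieAlgebra ℂ L]
    {R : Type*} [CommRing R] [Algebra ℂ R] (d : R) (x y : R ⊗[ℂ] L) :
    ⁅d • x, y⁆ = d • ⁅x, y⁆ := smul_lie d x y

/-- Let `L` be a finite-dimensional simple Lie algebra over `ℂ`, `R` a nontrivial commutative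
`ℂ`-algebra, `α, β ∈ R`, and `s` an invertible element of `R` with `s² = 4α + β²`.
Set `p_± := (−β ± s)/2`.  Then the maps `φ_± : x ↦ ±s⁻¹ • (p_± • x, x)` into `𝔞(α,β)` are
Lie algebra homomorphisms over `R` satisfying `[(z,0), φ_± x] = φ_± [z,x]` and
`[(0,z), φ_± x] = (p_± + β) • φ_± [z,x]` (so their images are Lie ideals of `𝔞(α,β)`),
and moreover `[φ_+ x, φ_− y] = 0`. -/
theorem ideals_of_nonzero_discriminant
    (L : Type*) [LieRing L] [LieAlgebra ℂ L] [FiniteDimensional ℂ L]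
    [LieAlgebra.IsSimple ℂ L]
    (R : Type*) [CommRing R] [Nontrivial R] [Algebra ℂ R]
    (α β : R) (s : Rˣ) (hs : (s : R) * (s : R) = 4 * α + β * β) :
    let pp : R := (1/2 : ℂ) • (-β + (s : R))
    let pm : R := (1/2 : ℂ) • (-β - (s : R))
    let φp : R ⊗[ℂ] L → (R ⊗[ℂ] L) × (R ⊗[ℂ] L) :=
      fun x => ((s⁻¹ : Rˣ) : R) • (pp • x, x)
    let φm : R ⊗[ℂ] L → (R ⊗[ℂ] L) × (R ⊗[ℂ] L) :=
      fun x => (-((s⁻¹ : Rˣ) : R)) • (pm • x, x)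
    (∀ x y, φp (x + y) = φp x + φp y) ∧ (∀ (r : R) x, φp (r • x) = r • φp x) ∧
    (∀ x y, φm (x + y) = φm x + φm y) ∧ (∀ (r : R) x, φm (r • x) = r • φm x) ∧
    (∀ x y, aBracket α β (φp x) (φp y) = φp ⁅x, y⁆) ∧
    (∀ x y, aBracket α β (φm x) (φm y) = φm ⁅x, y⁆) ∧
    (∀ z x, aBracket α β (z, 0) (φp x) = φp ⁅z, x⁆) ∧
    (∀ z x, aBracket α β (z, 0) (φm x) = φm ⁅z, x⁆) ∧
    (∀ z x, aBracket α β (0, z) (φp x) = (pp + β) • φp ⁅z, x⁆) ∧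
    (∀ z x, aBracket α β (0, z) (φm x) = (pm + β) • φm ⁅z, x⁆) ∧
    (∀ x y, aBracket α β (φp x) (φm y) = 0) := by
  intro pp pm φp φm
  have ha2 : (algebraMap ℂ R (1/2)) * 2 = 1 := by
    rw [show (2 : R) = algebraMap ℂ R 2 by rw [map_ofNat], ← map_mul]
    norm_num
  have hpp : pp = (algebraMap ℂ R (1/2)) * (-β + (s : R)) := Algebra.smul_def _ _
  have hpm : pm = (algebraMap ℂ R (1/2)) * (-β - (s : R)) := Algebra.smul_def _ _
  have hI1 : pp * pm = -α := by
    rw [hpp, hpm]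
    linear_combination (-(algebraMap ℂ R (1/2) * algebraMap ℂ R (1/2))) * hs +
      (-(α * (1 + algebraMap ℂ R (1/2) * 2))) * ha2
  have hI2 : pp + pm = -β := by
    rw [hpp, hpm]; linear_combination (-β) * ha2
  have hI3 : pp - pm = (s : R) := by
    rw [hpp, hpm]; linear_combination (s : R) * ha2
  have hu : ((s⁻¹ : Rˣ) : R) * (s : R) = 1 := s.inv_mul
  set u : R := ((s⁻¹ : Rˣ) : R) with hu_def
  refine ⟨?_, ?_, ?_, ?_, ?_, ?_, ?_, ?_, ?_, ?_, ?_⟩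
  · intro x y
    simp [φp, Prod.smul_mk, smul_add, Prod.mk_add_mk]
  · intro r x
    simp only [φp, Prod.smul_mk, smul_smul, Prod.mk.injEq]
    constructor <;> · congr 1; ring
  · intro x y
    simp only [φm, Prod.smul_mk, smul_add, Prod.mk_add_mk, Prod.mk.injEq]
  · intro r x
    simp only [φm, Prod.smul_mk, smul_smul, Prod.mk.injEq]
    constructor <;> · congr 1; ring
  · intro x y
    simp only [φp, aBracket, Prod.smul_mk, aux_lie_smul, aux_smul_lie, smul_smul,
      Prod.mk.injEq, ← add_smul]
    constructor
    · congr 1; linear_combination (u * pp) * hu + (u * u * pp) * hI3 + (u * u) * hI1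
    · congr 1; linear_combination (u * u) * hI3 + (u * u) * hI2 + u * hu
  · intro x y
    simp only [φm, aBracket, Prod.smul_mk, aux_lie_smul, aux_smul_lie, smul_smul,
      Prod.mk.injEq, ← add_smul]
    constructor
    · congr 1; linear_combination (-(u * u * pm)) * hI3 + (u * u) * hI1 + (-(u * pm)) * hu
    · congr 1; linear_combination (-(u * u)) * hI3 + (u * u) * hI2 + (-u) * hu
  · intro z x
    simp only [φp, aBracket, Prod.smul_mk, aux_lie_smul, aux_smul_lie, smul_smul,
      lie_zero, zero_lie, smul_zero, add_zero, zero_add, Prod.mk.injEq]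
  · intro z x
    simp only [φm, aBracket, Prod.smul_mk, aux_lie_smul, aux_smul_lie, smul_smul,
      lie_zero, zero_lie, smul_zero, add_zero, zero_add, Prod.mk.injEq]
  · intro z x
    simp only [φp, aBracket, Prod.smul_mk, aux_lie_smul, aux_smul_lie, smul_smul,
      lie_zero, zero_lie, smul_zero, add_zero, zero_add, Prod.mk.injEq, ← add_smul]
    constructor
    · congr 1; linear_combination (-(u * pp)) * hI2 + u * hI1
    · congr 1; ring
  · intro z x
    simp only [φm, aBracket, Prod.smul_mk, aux_lie_smul, aux_smul_lie, smul_smul,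
      lie_zero, zero_lie, smul_zero, add_zero, zero_add, Prod.mk.injEq, ← add_smul]
    constructor
    · congr 1; linear_combination (u * pm) * hI2 + (-u) * hI1
    · congr 1; ring
  · intro x y
    simp only [φp, φm, aBracket, Prod.smul_mk, aux_lie_smul, aux_smul_lie, smul_smul,
      ← add_smul, Prod.mk_eq_zero]
    constructor
    · rw [← zero_smul R ⁅x, y⁆]; congr 1; linear_combination (-(u * u)) * hI1
    · rw [← zero_smul R ⁅x, y⁆]; congr 1; linear_combination (-(u * u)) * hI2
end

section
/- Let 𝔤 be a finite-dimensional simple Lie algebra over ℂ, R a nontrivial commutative ring equipped with a ℂ-algebra structure, α, β ∈ R, and suppose s ∈ R is invertible with s² = 4α + β². Set p_± := (−β ± s)/2 and φ_±(x) := ±s⁻¹·(p_±·x, x). Then the map 𝔤_R × 𝔤_R → 𝔞(α,β), (x,y) ↦ φ_+(x) + φ_−(y), is an isomorphism of Lie algebras over R from the direct product Lie algebra 𝔤_R × 𝔤_R onto 𝔞(α,β). -/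
open TensorProduct

private lemma lie_smul_aux {R M : Type*} [CommRing R] [LieRing M] [LieAlgebra R M]
    (t : R) (x y : M) : ⁅x, t • y⁆ = t • ⁅x, y⁆ := by
  rw [← lie_skew, ← lie_skew x, smul_lie, smul_neg]

set_option maxHeartbeats 1000000 in
/-- Let `L` be a finite-dimensional simple Lie algebra over `ℂ`, `R` a nontrivial commutative
`ℂ`-algebra, `α, β ∈ R`, and `s` an invertible element of `R` with `s² = 4α + β²`.
With `p_± := (−β ± s)/2` and `φ_± : x ↦ ±s⁻¹ • (p_± • x, x)`, the map
`(x,y) ↦ φ_+ x + φ_− y` is an isomorphism of Lie algebras over `R` from the direct product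
Lie algebra `𝔤_R × 𝔤_R` (componentwise bracket) onto `𝔞(α,β)`. -/
theorem direct_sum_iso_of_nonzero_discriminant
    (L : Type*) [LieRing L] [LieAlgebra ℂ L] [FiniteDimensional ℂ L]
    [LieAlgebra.IsSimple ℂ L]
    (R : Type*) [CommRing R] [Nontrivial R] [Algebra ℂ R]
    (α β : R) (s : Rˣ) (hs : (s : R) * (s : R) = 4 * α + β * β) :
    let pp : R := (1/2 : ℂ) • (-β + (s : R))
    let pm : R := (1/2 : ℂ) • (-β - (s : R))
    let φp : R ⊗[ℂ] L → (R ⊗[ℂ] L) × (R ⊗[ℂ] L) :=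
      fun x => ((s⁻¹ : Rˣ) : R) • (pp • x, x)
    let φm : R ⊗[ℂ] L → (R ⊗[ℂ] L) × (R ⊗[ℂ] L) :=
      fun x => (-((s⁻¹ : Rˣ) : R)) • (pm • x, x)
    let Ψ : (R ⊗[ℂ] L) × (R ⊗[ℂ] L) → (R ⊗[ℂ] L) × (R ⊗[ℂ] L) :=
      fun u => φp u.1 + φm u.2
    Function.Bijective Ψ ∧
      (∀ u v, Ψ (u + v) = Ψ u + Ψ v) ∧
      (∀ (r : R) u, Ψ (r • u) = r • Ψ u) ∧
      (∀ u v, Ψ (⁅u.1, v.1⁆, ⁅u.2, v.2⁆) = aBracket α β (Ψ u) (Ψ v)) := by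
  intro pp pm φp φm Ψ
  have hsi : ((s⁻¹ : Rˣ) : R) * (s : R) = 1 := s.inv_mul
  have hc : (2 : R) * ((1/2 : ℂ) • (1 : R)) = 1 := by
    rw [Algebra.smul_def, mul_one, show (2:R) = algebraMap ℂ R 2 from
      (map_ofNat (algebraMap ℂ R) 2).symm, ← map_mul]
    norm_num
  have hpp : pp = ((1/2 : ℂ) • (1 : R)) * (-β + (s : R)) := by
    simp [pp, Algebra.smul_def]
  have hpm : pm = ((1/2 : ℂ) • (1 : R)) * (-β - (s : R)) := by
    simp [pm, Algebra.smul_def]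
  set c : R := (1/2 : ℂ) • (1 : R) with hcdef
  have hdiff : pp - pm = (s : R) := by
    rw [hpp, hpm]; linear_combination (s : R) * hc
  have hsum : pp + pm = -β := by
    rw [hpp, hpm]; linear_combination (-β) * hc
  have hprod : pp * pm = -α := by
    rw [hpp, hpm]; linear_combination (-c*c)*hs - α*(2*c+1)*hc
  clear hpp hpm hc hcdef
  clear_value pp pm
  refine ⟨?_, ?_, ?_, ?_⟩
  · refine Function.bijective_iff_has_inverse.mpr
      ⟨fun w => (w.1 - pm • w.2, w.1 - pp • w.2), fun u => ?_, fun w => ?_⟩ <;>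
    · simp only [Ψ, φp, φm]
      refine Prod.ext ?_ ?_ <;>
        simp only [Prod.fst_add, Prod.snd_add, Prod.smul_fst,
          Prod.smul_snd, Prod.fst_sub, Prod.snd_sub] <;>
        match_scalars <;>
        first
          | ring1
          | linear_combination ((s⁻¹ : Rˣ) : R) * hdiff + hsi
  · intro u v
    simp only [Ψ, φp, φm]
    refine Prod.ext ?_ ?_ <;>
      simp only [Prod.fst_add, Prod.snd_add, Prod.smul_fst, Prod.smul_snd] <;>
      match_scalars <;> ring1
  · intro r u
    simp only [Ψ, φp, φm]
    refine Prod.ext ?_ ?_ <;>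
      simp only [Prod.fst_add, Prod.snd_add, Prod.smul_fst, Prod.smul_snd] <;>
      match_scalars <;> ring1
  · intro u v
    have h1 : ((s⁻¹ : Rˣ) : R) * pp - ((s⁻¹ : Rˣ) : R) * pm = 1 := by
      linear_combination ((s⁻¹ : Rˣ) : R) * hdiff + hsi
    simp only [Ψ, φp, φm, aBracket]
    refine Prod.ext ?_ ?_ <;>
      simp only [Prod.fst_add, Prod.snd_add, Prod.smul_fst, Prod.smul_snd,
        lie_add, add_lie, lie_smul_aux, smul_lie] <;>
      match_scalars <;>
      first
        | ring1
        | linear_combination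
            (-(((s⁻¹:Rˣ):R)*((s⁻¹:Rˣ):R)))*hprod + (-(((s⁻¹:Rˣ):R)*pp))*h1
        | linear_combination
            (-(((s⁻¹:Rˣ):R)*((s⁻¹:Rˣ):R)))*hprod + (((s⁻¹:Rˣ):R)*pm)*h1
        | linear_combination (((s⁻¹:Rˣ):R)*((s⁻¹:Rˣ):R))*hprod
        | linear_combination
            (-(((s⁻¹:Rˣ):R)*((s⁻¹:Rˣ):R)))*hsum + (-((s⁻¹:Rˣ):R))*h1
        | linear_combination
            (-(((s⁻¹:Rˣ):R)*((s⁻¹:Rˣ):R)))*hsum + ((s⁻¹:Rˣ):R)*h1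
        | linear_combination (((s⁻¹:Rˣ):R)*((s⁻¹:Rˣ):R))*hsum
end

section
/- Let Φ be an irreducible reduced crystallographic root system in a finite-dimensional real inner product space E, normalized so that the long roots α satisfy (α,α) = 2, let Φ⁺ be a system of positive roots, ρ := (1/2)·∑_{α ∈ Φ⁺} α, ρ^∨ := ∑_{α ∈ Φ⁺} α/(α,α), and let r^∨ := 2/(α_s, α_s) for any short root α_s (the lacing number, equal to 1 if all roots have the same length). Then for every integer n ≥ 1 and every nonzero λ in the root lattice ℤΦ satisfying (λ, α) ≥ 0 for all α ∈ Φ⁺, one has (n·r^∨/2)·(λ,λ) + (λ, n·r^∨·ρ − ρ^∨) > 0. -/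
open RealInnerProductSpace

/-- Positivity of the conformal weight `h(λ) = (n·r^∨/2)·(λ,λ) + (λ, n·r^∨·ρ − ρ^∨)` for a
nonzero dominant element `λ` of the root lattice of an irreducible reduced crystallographic
root system `Φ`, normalized so that long roots have squared length `2`.  Here `Φ⁺ = P` is a
system of positive roots, `ρ = (1/2)·∑_{α ∈ Φ⁺} α`, `ρ^∨ = ∑_{α ∈ Φ⁺} α/(α,α)`, and
`r^∨ = 2/(αs,αs)` for a short root `αs`. -/
theorem conformal_weight_positive
    (E : Type*) [NormedAddCommGroup E] [InnerProductSpace ℝ E] [FiniteDimensional ℝ E]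
    (Φ : Finset E)
    -- `Φ` is a root system:
    (hne : Φ.Nonempty)
    (h0 : (0 : E) ∉ Φ)
    (hspan : Submodule.span ℝ (Φ : Set E) = ⊤)
    (hrefl : ∀ α ∈ Φ, ∀ β ∈ Φ, β - (2 * ⟪β, α⟫ / ⟪α, α⟫) • α ∈ Φ)
    -- crystallographic:
    (hcrys : ∀ α ∈ Φ, ∀ β ∈ Φ, ∃ m : ℤ, 2 * ⟪α, β⟫ / ⟪β, β⟫ = (m : ℝ))
    -- reduced:
    (hred : ∀ α ∈ Φ, ∀ t : ℝ, t • α ∈ Φ → t = 1 ∨ t = -1)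
    -- irreducible:
    (hirr : ¬ ∃ A B : Set E, Disjoint A B ∧ A ∪ B = (Φ : Set E) ∧
      A.Nonempty ∧ B.Nonempty ∧ ∀ a ∈ A, ∀ b ∈ B, ⟪a, b⟫ = 0)
    -- normalization: long roots `α` satisfy `(α,α) = 2`:
    (hlong : (∀ α ∈ Φ, ⟪α, α⟫ ≤ 2) ∧ ∃ α ∈ Φ, ⟪α, α⟫ = 2)
    -- `P = Φ⁺` is a system of positive roots:
    (P : Finset E) (hPsub : P ⊆ Φ)
    (hPpos : ∀ α ∈ Φ, (α ∈ P ↔ ¬ (-α ∈ P)))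
    (hPclosed : ∀ α ∈ P, ∀ β ∈ P, α + β ∈ Φ → α + β ∈ P)
    -- `αs` is a short root, so that `r^∨ = 2/(αs,αs)`:
    (αs : E) (hαs : αs ∈ Φ) (hshort : ∀ β ∈ Φ, ⟪αs, αs⟫ ≤ ⟪β, β⟫)
    -- `n ≥ 1` and `λ` a nonzero dominant element of the root lattice:
    (n : ℤ) (hn : 1 ≤ n)
    (lam : E) (hlam : lam ∈ AddSubgroup.closure (Φ : Set E)) (hlam0 : lam ≠ 0)
    (hdom : ∀ α ∈ P, 0 ≤ ⟪lam, α⟫) :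
    0 < ((n : ℝ) * (2 / ⟪αs, αs⟫) / 2) * ⟪lam, lam⟫ +
      ⟪lam, ((n : ℝ) * (2 / ⟪αs, αs⟫)) • ((1 / 2 : ℝ) • ∑ α ∈ P, α) -
        ∑ α ∈ P, (⟪α, α⟫)⁻¹ • α⟫ := by
  have hαs0 : αs ≠ 0 := fun h => h0 (h ▸ hαs)
  have hs : (0:ℝ) < ⟪αs, αs⟫ := by rw [real_inner_self_eq_norm_sq]; exact pow_pos (norm_pos_iff.mpr hαs0) 2
  have hlampos : (0:ℝ) < ⟪lam, lam⟫ := by rw [real_inner_self_eq_norm_sq]; exact pow_pos (norm_pos_iff.mpr hlam0) 2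
  have hcoef : (0:ℝ) < (n : ℝ) * (2 / ⟪αs, αs⟫) / 2 := by
    have : (1:ℝ) ≤ (n:ℝ) := by exact_mod_cast hn
    positivity
  have hkey : (0:ℝ) ≤ ⟪lam, ((n : ℝ) * (2 / ⟪αs, αs⟫)) • ((1 / 2 : ℝ) • ∑ α ∈ P, α) -
      ∑ α ∈ P, (⟪α, α⟫)⁻¹ • α⟫ := by
    rw [inner_sub_right, inner_smul_right, inner_smul_right, inner_sum, inner_sum]
    simp only [inner_smul_right]
    rw [sub_nonneg]
    have heq : (n:ℝ) * (2 / ⟪αs, αs⟫) * (1 / 2 * ∑ i ∈ P, ⟪lam, i⟫) =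
        ∑ i ∈ P, (n:ℝ) * (2 / ⟪αs, αs⟫) * (1 / 2 * ⟪lam, i⟫) := by
      rw [Finset.mul_sum, Finset.mul_sum]
    rw [heq]
    apply Finset.sum_le_sum
    intro α hαP
    have hαΦ := hPsub hαP
    have hα0 : α ≠ 0 := fun h => h0 (h ▸ hαΦ)
    have hαα : (0:ℝ) < ⟪α, α⟫ := by rw [real_inner_self_eq_norm_sq]; exact pow_pos (norm_pos_iff.mpr hα0) 2
    have hla := hdom α hαP
    have h1 : (⟪α, α⟫)⁻¹ ≤ (n : ℝ) * (2 / ⟪αs, αs⟫) * (1 / 2) := by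
      have hss := hshort α hαΦ
      have hn' : (1:ℝ) ≤ (n:ℝ) := by exact_mod_cast hn
      have h2 : (⟪α, α⟫)⁻¹ ≤ (⟪αs, αs⟫)⁻¹ := by
        simpa using one_div_le_one_div_of_le hs hss
      calc (⟪α, α⟫)⁻¹ ≤ (⟪αs, αs⟫)⁻¹ := h2
        _ = 1 * (2 / ⟪αs, αs⟫) * (1 / 2) := by field_simp
        _ ≤ (n : ℝ) * (2 / ⟪αs, αs⟫) * (1 / 2) := by
            apply mul_le_mul_of_nonneg_right (mul_le_mul_of_nonneg_right hn' (by positivity))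
            norm_num
    calc (⟪α, α⟫)⁻¹ * ⟪lam, α⟫ ≤ (n : ℝ) * (2 / ⟪αs, αs⟫) * (1 / 2) * ⟪lam, α⟫ :=
          mul_le_mul_of_nonneg_right h1 hla
      _ = (n : ℝ) * (2 / ⟪αs, αs⟫) * (1 / 2 * ⟪lam, α⟫) := by ring

  nlinarith
end
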